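/- The natural ℚ-algebra homomorphism ℚ[k,η]/⟨k³, η¹⁴−4kη¹³+16k²η¹²⟩ → A := ℚ[k,h,η]/⟨k³, η¹⁴−4kη¹³+16k²η¹², h²−hk+k²⟩ (sending k ↦ k, η ↦ η) is injective, and A is a free module of rank 2 over the image, with basis {1, h}. (A is the Chow ring of the exceptional divisor E = Fl(V) ×_{ℙV} C₄, and the complement of the image in the degree-shifted summand generated by h computes the kernel of the pushforward to the Chow ring of C₄.) -/

import Mathlib

/-!
Over `B`, the class `h` satisfies the monic quadratic `h² - kh + k²`, and the relations of `A`
are those of `B` together with this one, so `A ≅ B[h]/(h² - kh + k²)`. A quotient of `B[h]` by a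
monic quadratic is free over `B` with basis `{1, h}`; this gives at once the unique
representation and the injectivity of `B → A`.
-/

open MvPolynomial

noncomputable section

/-- Variables of ℚ[k,η]: `X 0 = k`, `X 1 = η`.  The ideal ⟨k³, η¹⁴−4kη¹³+16k²η¹²⟩. -/
def JB : Ideal (MvPolynomial (Fin 2) ℚ) :=
  Ideal.span {X 0 ^ 3, X 1 ^ 14 - 4 * X 0 * X 1 ^ 13 + 16 * X 0 ^ 2 * X 1 ^ 12}

/-- B = ℚ[k,η]/⟨k³, η¹⁴−4kη¹³+16k²η¹²⟩, the Chow ring of C₄. -/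
abbrev B := MvPolynomial (Fin 2) ℚ ⧸ JB

/-- Variables of ℚ[k,h,η]: `X 0 = k`, `X 1 = h`, `X 2 = η`.  The ideal
⟨k³, η¹⁴−4kη¹³+16k²η¹², h²−hk+k²⟩. -/
def JA : Ideal (MvPolynomial (Fin 3) ℚ) :=
  Ideal.span {X 0 ^ 3, X 2 ^ 14 - 4 * X 0 * X 2 ^ 13 + 16 * X 0 ^ 2 * X 2 ^ 12,
    X 1 ^ 2 - X 1 * X 0 + X 0 ^ 2}

/-- A = ℚ[k,h,η]/⟨k³, η¹⁴−4kη¹³+16k²η¹², h²−hk+k²⟩, the Chow ring of the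
exceptional divisor E. -/
abbrev A := MvPolynomial (Fin 3) ℚ ⧸ JA

theorem AdjoinRoot.bijective_of_add_of_mul_root {R : Type*} [CommRing R] {g : Polynomial R}
    (hg : g.Monic) (hdeg : g.natDegree = 2) :
    Function.Bijective fun bc : R × R => of g bc.1 + of g bc.2 * root g := by
  let basis := (powerBasis' hg).basis.reindex (finCongr hdeg)
  have hbasis (i : Fin 2) : basis i = root g ^ (i : ℕ) := by
    simp [basis]
    rfl
  convert basis.equivFun.symm.bijective.comp (piFinTwoEquiv fun _ => R).symm.bijective using 1
  funext bc
  simp [Module.Basis.equivFun_symm_apply, Fin.sum_univ_two, hbasis, Algebra.smul_def]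

def kB : B := Ideal.Quotient.mk JB (X 0)

def ηB : B := Ideal.Quotient.mk JB (X 1)

def hA : A := Ideal.Quotient.mk JA (X 1)

theorem kB_pow_three : kB ^ 3 = 0 :=
  Ideal.Quotient.eq_zero_iff_mem.mpr (Ideal.subset_span (by simp))

theorem ηB_rel : ηB ^ 14 - 4 * kB * ηB ^ 13 + 16 * kB ^ 2 * ηB ^ 12 = 0 :=
  Ideal.Quotient.eq_zero_iff_mem.mpr (Ideal.subset_span (by simp))

theorem JB_le_ker_constantCoeff :
    JB ≤ RingHom.ker (constantCoeff : MvPolynomial (Fin 2) ℚ →+* ℚ) := by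
  rw [JB, Ideal.span_le]
  rintro p (rfl | rfl) <;> simp

instance : Nontrivial B :=
  Ideal.Quotient.nontrivial_iff.mpr
    (ne_top_of_le_ne_top (RingHom.ker_ne_top _) JB_le_ker_constantCoeff)

def hPoly : Polynomial B :=
  Polynomial.X ^ 2 - Polynomial.C kB * Polynomial.X + Polynomial.C (kB ^ 2)

theorem hPoly_monic : hPoly.Monic := by
  unfold hPoly
  monicity!

theorem hPoly_natDegree : hPoly.natDegree = 2 := by
  unfold hPoly
  compute_degree!

theorem eval₂_hPoly {S : Type*} [CommRing S] (i : B →+* S) (x : S) :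
    hPoly.eval₂ i x = x ^ 2 - x * i kB + i kB ^ 2 := by
  simp only [hPoly, Polynomial.eval₂_add, Polynomial.eval₂_sub, Polynomial.eval₂_mul,
    Polynomial.eval₂_pow, Polynomial.eval₂_X, Polynomial.eval₂_C, map_pow]
  ring

theorem JB_le_comap_JA : JB ≤ JA.comap (rename (![0, 2] : Fin 2 → Fin 3)) := by
  rw [JB, Ideal.span_le]
  rintro p (rfl | rfl) <;> apply Ideal.subset_span <;> simp [map_ofNat]

def inclBA : B →ₐ[ℚ] A := Ideal.quotientMapₐ JA (rename ![0, 2]) JB_le_comap_JA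

theorem inclBA_mk (p : MvPolynomial (Fin 2) ℚ) :
    inclBA (Ideal.Quotient.mk JB p) = Ideal.Quotient.mk JA (rename ![0, 2] p) :=
  rfl

theorem eval₂_hPoly_hA : hPoly.eval₂ (inclBA : B →+* A) hA = 0 := by
  have hrel : Ideal.Quotient.mk JA (X 1 ^ 2 - X 1 * X 0 + X 0 ^ 2) = 0 :=
    Ideal.Quotient.eq_zero_iff_mem.mpr (Ideal.subset_span (by simp))
  simpa [eval₂_hPoly, kB, hA, inclBA_mk] using hrel

def ofAdjoinRoot : AdjoinRoot hPoly →ₐ[ℚ] A :=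
  AdjoinRoot.liftAlgHom hPoly inclBA hA eval₂_hPoly_hA

def toAdjoinRootVars : Fin 3 → AdjoinRoot hPoly :=
  ![AdjoinRoot.of hPoly kB, AdjoinRoot.root hPoly, AdjoinRoot.of hPoly ηB]

theorem JA_le_ker_aeval : JA ≤ RingHom.ker (aeval toAdjoinRootVars) := by
  rw [JA, Ideal.span_le]
  rintro p (rfl | rfl | rfl) <;> simp only [SetLike.mem_coe, RingHom.mem_ker]
  · simp only [map_pow, aeval_X, toAdjoinRootVars, Matrix.cons_val_zero]
    rw [← map_pow, kB_pow_three, map_zero]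
  · have := congrArg (AdjoinRoot.of hPoly) ηB_rel
    simp only [map_add, map_sub, map_mul, map_pow, map_ofNat, map_zero] at this
    simpa [toAdjoinRootVars] using this
  · simp [← eval₂_hPoly, toAdjoinRootVars]

def toAdjoinRoot : A →ₐ[ℚ] AdjoinRoot hPoly :=
  Ideal.Quotient.liftₐ JA (aeval toAdjoinRootVars) fun _ hp => JA_le_ker_aeval hp

theorem toAdjoinRoot_mk (p : MvPolynomial (Fin 3) ℚ) :
    toAdjoinRoot (Ideal.Quotient.mk JA p) = aeval toAdjoinRootVars p :=
  rfl

theorem toAdjoinRoot_inclBA (b : B) : toAdjoinRoot (inclBA b) = AdjoinRoot.of hPoly b := by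
  suffices toAdjoinRoot.comp inclBA = (AdjoinRoot.of hPoly).toRatAlgHom from
    congrArg (fun φ : B →ₐ[ℚ] AdjoinRoot hPoly => φ b) this
  refine Ideal.Quotient.algHom_ext ℚ (MvPolynomial.algHom_ext fun i => ?_)
  fin_cases i <;> simp [inclBA_mk, toAdjoinRoot_mk, toAdjoinRootVars, kB, ηB]

theorem toAdjoinRoot_hA : toAdjoinRoot hA = AdjoinRoot.root hPoly := by
  simp [hA, toAdjoinRoot_mk, toAdjoinRootVars]

theorem ofAdjoinRoot_comp_toAdjoinRoot : ofAdjoinRoot.comp toAdjoinRoot = AlgHom.id ℚ A := by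
  refine Ideal.Quotient.algHom_ext ℚ (MvPolynomial.algHom_ext fun i => ?_)
  fin_cases i <;> simp [ofAdjoinRoot, toAdjoinRoot_mk, toAdjoinRootVars, inclBA_mk, kB, ηB, hA]

theorem toAdjoinRoot_comp_ofAdjoinRoot :
    toAdjoinRoot.comp ofAdjoinRoot = AlgHom.id ℚ (AdjoinRoot hPoly) := by
  refine AlgHom.ext fun x => ?_
  obtain ⟨p, rfl⟩ := AdjoinRoot.mk_surjective x
  have hcomp : (toAdjoinRoot : A →+* AdjoinRoot hPoly).comp inclBA = AdjoinRoot.of hPoly :=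
    RingHom.ext toAdjoinRoot_inclBA
  change (toAdjoinRoot : A →+* AdjoinRoot hPoly) (p.eval₂ inclBA hA) = _
  rw [Polynomial.hom_eval₂, hcomp, RingHom.coe_coe, toAdjoinRoot_hA, ← AdjoinRoot.aeval_eq,
    Polynomial.aeval_def, AdjoinRoot.algebraMap_eq, AlgHom.id_apply]

def adjoinRootEquiv : AdjoinRoot hPoly ≃ₐ[ℚ] A :=
  AlgEquiv.ofAlgHom ofAdjoinRoot toAdjoinRoot ofAdjoinRoot_comp_toAdjoinRoot
    toAdjoinRoot_comp_ofAdjoinRoot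

theorem bijective_inclBA_add_inclBA_mul_hA :
    Function.Bijective fun bc : B × B => inclBA bc.1 + inclBA bc.2 * hA := by
  convert adjoinRootEquiv.bijective.comp
    (AdjoinRoot.bijective_of_add_of_mul_root hPoly_monic hPoly_natDegree) using 1
  funext bc
  simp [adjoinRootEquiv, ofAdjoinRoot]

/-- The natural map B → A (k ↦ k, η ↦ η) is injective, and A is a free module of
rank 2 over the image, with basis {1, h}: every element of A is uniquely of the form
f(b₀) + f(b₁)·h with b₀, b₁ ∈ B. -/
theorem chow_E_free_over_chow_C4 :
    ∃ f : B →ₐ[ℚ] A,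
      (∀ p : MvPolynomial (Fin 2) ℚ,
        f (Ideal.Quotient.mk JB p) =
          Ideal.Quotient.mk JA (rename (![0, 2] : Fin 2 → Fin 3) p)) ∧
      Function.Injective f ∧
      ∀ a : A, ∃! bc : B × B,
        a = f bc.1 + f bc.2 * Ideal.Quotient.mk JA (X 1) := by
  refine ⟨inclBA, inclBA_mk, fun b b' h => ?_, fun a => ?_⟩
  · have := bijective_inclBA_add_inclBA_mul_hA.injective (a₁ := (b, 0)) (a₂ := (b', 0))
      (by simpa using h)
    exact congrArg Prod.fst this
  · simpa only [eq_comm, hA] using bijective_inclBA_add_inclBA_mul_hA.existsUnique a
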